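/- Let p be a prime with p² dividing the positive integer n, and let d be a divisor of n. Then the number of cyclic subgroups of Z_{p²} × Z_n of order d equals: p², if p³ divides d; p² + p, if p² divides d but p³ does not; p + 1, if p divides d but p² does not; and 1, if p does not divide d. -/

import Mathlib

open Polynomial

/-- The power graph of an additive group `G`: distinct vertices `x` and `y` are adjacent
iff one is an (integral) multiple of the other, i.e. `x ∈ ⟨y⟩` or `y ∈ ⟨x⟩`. -/
def addPowerGraph (G : Type*) [AddGroup G] : SimpleGraph G where
  Adj x y := x ≠ y ∧ (x ∈ AddSubgroup.zmultiples y ∨ y ∈ AddSubgroup.zmultiples x)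
  symm := by
    constructor
    intro x y h
    exact ⟨h.1.symm, h.2.symm⟩
  loopless := by
    constructor
    intro x h
    exact h.1 rfl

open Classical in
/-- The adjacency matrix (over `ℤ`) of a finite simple graph. -/
noncomputable def adjMat {V : Type*} [Fintype V] (G : SimpleGraph V) : Matrix V V ℤ :=
  fun i j => if G.Adj i j then 1 else 0

/-- The number of cyclic subgroups of order `d` of an additive group `G`. -/
noncomputable def numCyclicSubgroups (G : Type*) [AddGroup G] (d : ℕ) : ℕ :=
  Nat.card {H : AddSubgroup G // IsAddCyclic H ∧ Nat.card H = d}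

/-!
A cyclic subgroup of order `d` has `φ d` generators, each of order `d`, so the number of
cyclic subgroups of order `d` is the number of elements of order `d` divided by `φ d`.
Writing `n = p ^ v * m` with `p ∤ m`, the Chinese remainder theorem turns
`ℤ/p² × ℤ/n` into `(ℤ/p² × ℤ/p^v) × ℤ/m`; for factors of coprime orders the counts of
cyclic subgroups multiply, and the cyclic factor `ℤ/m` contributes `1`. In
`ℤ/p² × ℤ/p^v` there are `p ^ (min 2 k + k)` elements killed by `p ^ k` (for `k ≤ v`), and
the elements of order `p ^ (k + 1)` are those killed by `p ^ (k + 1)` but not by `p ^ k`.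
-/

section
variable {G : Type*} [AddGroup G]

open AddSubgroup

theorem card_addOrderOf_eq_of_isAddCyclic [Finite G] [IsAddCyclic G] {d : ℕ}
    (hd : d ∣ Nat.card G) : Nat.card {x : G // addOrderOf x = d} = d.totient := by
  have : Fintype G := Fintype.ofFinite G
  rw [Nat.card_eq_fintype_card, Fintype.card_subtype,
    IsAddCyclic.card_addOrderOf_eq_totient (by rwa [← Nat.card_eq_fintype_card])]

theorem zmultiples_eq_of_mem_of_card_eq {H : AddSubgroup G} [Finite H] {y : G} (hy : y ∈ H)
    (h : addOrderOf y = Nat.card H) : zmultiples y = H :=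
  eq_of_le_of_card_ge (zmultiples_le_of_mem hy) (by rw [Nat.card_zmultiples, h])

theorem numCyclicSubgroups_mul_totient [Finite G] (d : ℕ) :
    numCyclicSubgroups G d * d.totient = Nat.card {x : G // addOrderOf x = d} := by
  let f (x : {x : G // addOrderOf x = d}) :
      {H : AddSubgroup G // IsAddCyclic H ∧ Nat.card H = d} :=
    ⟨zmultiples x.1, inferInstance, by rw [Nat.card_zmultiples, x.2]⟩
  have fiber (H) : Nat.card {x // f x = H} = d.totient := by
    obtain ⟨H, _, hH⟩ := H
    -- the fibre of `f` over `H` is the set of generators of `H`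
    let e : {x // f x = ⟨H, ‹_›, hH⟩} ≃ {y : H // addOrderOf y = d} :=
      { toFun x := ⟨⟨x.1.1, (congrArg Subtype.val x.2).le (mem_zmultiples _)⟩,
          by rw [addOrderOf_mk, x.1.2]⟩
        invFun y := ⟨⟨y.1, by rw [addOrderOf_coe, y.2]⟩, Subtype.ext
          (zmultiples_eq_of_mem_of_card_eq y.1.2 (by rw [addOrderOf_coe, y.2, hH]))⟩
        left_inv _ := rfl
        right_inv _ := rfl }
    rw [Nat.card_congr e, card_addOrderOf_eq_of_isAddCyclic (dvd_of_eq hH.symm)]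
  have : Fintype {H : AddSubgroup G // IsAddCyclic H ∧ Nat.card H = d} := Fintype.ofFinite _
  rw [← Nat.card_congr (Equiv.sigmaFiberEquiv f), Nat.card_sigma, Finset.sum_congr rfl
    fun H _ => fiber H, Finset.sum_const, Finset.card_univ, smul_eq_mul, numCyclicSubgroups,
    Nat.card_eq_fintype_card]

theorem card_addOrderOf_dvd_of_isAddCyclic {C : Type*} [AddCommGroup C] [Finite C]
    [IsAddCyclic C] (M : ℕ) : Nat.card {x : C // addOrderOf x ∣ M} = (Nat.card C).gcd M := by
  rw [← IsAddCyclic.card_nsmulAddMonoidHom_ker C M]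
  exact Nat.card_congr <| Equiv.subtypeEquivRight fun x => by
    rw [AddMonoidHom.mem_ker, nsmulAddMonoidHom_apply, addOrderOf_dvd_iff_nsmul_eq_zero]

theorem card_addOrderOf_eq_prime_pow_succ [Finite G] {p : ℕ} (hp : p.Prime) (k : ℕ) :
    Nat.card {x : G // addOrderOf x = p ^ (k + 1)} =
      Nat.card {x : G // addOrderOf x ∣ p ^ (k + 1)} -
        Nat.card {x : G // addOrderOf x ∣ p ^ k} := by
  have hdiff : {x : G | addOrderOf x = p ^ (k + 1)} =
      {x | addOrderOf x ∣ p ^ (k + 1)} \ {x | addOrderOf x ∣ p ^ k} := by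
    ext x
    refine ⟨fun h => ⟨h ▸ dvd_rfl, ?_⟩,
      fun ⟨h₁, h₂⟩ => Nat.eq_prime_pow_of_dvd_least_prime_pow hp h₂ h₁⟩
    rw [Set.mem_ofPred_eq, h, Nat.pow_dvd_pow_iff_le_right hp.one_lt]
    omega
  exact (congrArg Set.ncard hdiff).trans
    (Set.ncard_sdiff fun x hx => dvd_trans hx (pow_dvd_pow p k.le_succ))

theorem numCyclicSubgroups_one [Finite G] : numCyclicSubgroups G 1 = 1 := by
  have h := numCyclicSubgroups_mul_totient (G := G) 1
  rwa [Nat.totient_one, mul_one,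
    Nat.card_congr (Equiv.subtypeEquivRight fun _ => AddMonoid.addOrderOf_eq_one_iff),
    Nat.card_unique] at h

theorem numCyclicSubgroups_of_isAddCyclic [Finite G] [IsAddCyclic G] {d : ℕ}
    (hd : d ∣ Nat.card G) : numCyclicSubgroups G d = 1 := by
  have hd₀ : 0 < d := Nat.pos_of_dvd_of_pos hd Nat.card_pos
  apply Nat.eq_of_mul_eq_mul_right (Nat.totient_pos.2 hd₀)
  rw [numCyclicSubgroups_mul_totient, one_mul, card_addOrderOf_eq_of_isAddCyclic hd]

theorem numCyclicSubgroups_congr {H : Type*} [AddGroup H] (e : G ≃+ H) (d : ℕ) :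
    numCyclicSubgroups G d = numCyclicSubgroups H d :=
  Nat.card_congr <| e.mapAddSubgroup.toEquiv.subtypeEquiv fun K =>
    (e.addSubgroupMap K).isAddCyclic.and <| by
      rw [Nat.card_congr (e.addSubgroupMap K).toEquiv]; rfl

end

theorem Nat.eq_and_eq_of_mul_eq_mul_of_coprime {a b c d : ℕ} (had : a.Coprime d)
    (hcb : c.Coprime b) (h : a * b = c * d) : a = c ∧ b = d :=
  ⟨Nat.dvd_antisymm (had.dvd_of_dvd_mul_right (h ▸ dvd_mul_right a b))
      (hcb.dvd_of_dvd_mul_right (h ▸ dvd_mul_right c d)),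
    Nat.dvd_antisymm (hcb.symm.dvd_of_dvd_mul_left (h ▸ dvd_mul_left b a))
      (had.symm.dvd_of_dvd_mul_left (h.symm ▸ dvd_mul_left d c))⟩

theorem Nat.gcd_pow_pow (p a b : ℕ) : (p ^ a).gcd (p ^ b) = p ^ min a b := by
  rcases le_total a b with h | h
  · rw [min_eq_left h, Nat.gcd_eq_left (pow_dvd_pow p h)]
  · rw [min_eq_right h, Nat.gcd_eq_right (pow_dvd_pow p h)]

section Prod
variable {A B : Type*} [AddGroup A] [AddGroup B]

theorem card_prod_addOrderOf_dvd (M : ℕ) :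
    Nat.card {x : A × B // addOrderOf x ∣ M} =
      Nat.card {a : A // addOrderOf a ∣ M} * Nat.card {b : B // addOrderOf b ∣ M} := by
  rw [← Nat.card_prod]
  exact Nat.card_congr <| (Equiv.subtypeEquivRight fun x => by
    rw [Prod.addOrderOf, Nat.lcm_dvd_iff]).trans
      (Equiv.subtypeProdEquivProd (p := (addOrderOf · ∣ M)) (q := (addOrderOf · ∣ M)))

theorem card_prod_addOrderOf_eq_mul_of_coprime (hAB : (Nat.card A).Coprime (Nat.card B))
    {d₁ d₂ : ℕ} (h₁ : d₁ ∣ Nat.card A) (h₂ : d₂ ∣ Nat.card B) :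
    Nat.card {x : A × B // addOrderOf x = d₁ * d₂} =
      Nat.card {a : A // addOrderOf a = d₁} * Nat.card {b : B // addOrderOf b = d₂} := by
  have key (x : A × B) :
      addOrderOf x = d₁ * d₂ ↔ addOrderOf x.1 = d₁ ∧ addOrderOf x.2 = d₂ := by
    have ha := addOrderOf_dvd_natCard x.1
    have hb := addOrderOf_dvd_natCard x.2
    rw [Prod.addOrderOf, (hAB.of_dvd ha hb).lcm_eq_mul]
    exact ⟨Nat.eq_and_eq_of_mul_eq_mul_of_coprime (hAB.of_dvd ha h₂) (hAB.of_dvd h₁ hb),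
      fun ⟨ha, hb⟩ => ha ▸ hb ▸ rfl⟩
  rw [← Nat.card_prod]
  exact Nat.card_congr <| (Equiv.subtypeEquivRight key).trans
    (Equiv.subtypeProdEquivProd (p := (addOrderOf · = d₁)) (q := (addOrderOf · = d₂)))

theorem numCyclicSubgroups_prod_of_coprime [Finite A] [Finite B]
    (hAB : (Nat.card A).Coprime (Nat.card B)) {d₁ d₂ : ℕ} (h₁ : d₁ ∣ Nat.card A)
    (h₂ : d₂ ∣ Nat.card B) :
    numCyclicSubgroups (A × B) (d₁ * d₂) =
      numCyclicSubgroups A d₁ * numCyclicSubgroups B d₂ := by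
  have hd₁ : 0 < d₁ := Nat.pos_of_dvd_of_pos h₁ Nat.card_pos
  have hd₂ : 0 < d₂ := Nat.pos_of_dvd_of_pos h₂ Nat.card_pos
  apply Nat.eq_of_mul_eq_mul_right (Nat.totient_pos.2 (Nat.mul_pos hd₁ hd₂))
  rw [numCyclicSubgroups_mul_totient, card_prod_addOrderOf_eq_mul_of_coprime hAB h₁ h₂,
    Nat.totient_mul (hAB.of_dvd h₁ h₂), ← numCyclicSubgroups_mul_totient,
    ← numCyclicSubgroups_mul_totient]
  ring

end Prod

theorem card_zmod_prime_pow_prod_addOrderOf_dvd {p : ℕ} [NeZero p] (a b k : ℕ) :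
    Nat.card {x : ZMod (p ^ a) × ZMod (p ^ b) // addOrderOf x ∣ p ^ k} =
      p ^ (min a k + min b k) := by
  rw [card_prod_addOrderOf_dvd, card_addOrderOf_dvd_of_isAddCyclic,
    card_addOrderOf_dvd_of_isAddCyclic, Nat.card_zmod, Nat.card_zmod, Nat.gcd_pow_pow,
    Nat.gcd_pow_pow, pow_add]

theorem numCyclicSubgroups_zmod_prime_pow_prod_mul_totient {p : ℕ} (hp : p.Prime) (a b k : ℕ) :
    numCyclicSubgroups (ZMod (p ^ a) × ZMod (p ^ b)) (p ^ (k + 1)) * (p ^ (k + 1)).totient =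
      p ^ (min a (k + 1) + min b (k + 1)) - p ^ (min a k + min b k) := by
  have : NeZero p := ⟨hp.ne_zero⟩
  rw [numCyclicSubgroups_mul_totient, card_addOrderOf_eq_prime_pow_succ hp,
    card_zmod_prime_pow_prod_addOrderOf_dvd, card_zmod_prime_pow_prod_addOrderOf_dvd]

-- `h` says `c * φ (p ^ (k + 1)) = p ^ (min a (k + 1) + (k + 1)) - p ^ (min a k + k)`,
-- with the subtractions cleared.
theorem numCyclicSubgroups_zmod_prime_pow_prod_eq {p a b k c : ℕ} (hp : p.Prime)
    (hk : k + 1 ≤ b)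
    (h : c * p ^ k * p + p ^ (min a k + k) = c * p ^ k + p ^ (min a (k + 1) + (k + 1))) :
    numCyclicSubgroups (ZMod (p ^ a) × ZMod (p ^ b)) (p ^ (k + 1)) = c := by
  apply Nat.eq_of_mul_eq_mul_right (Nat.totient_pos.2 (pow_pos hp.pos (k + 1)))
  rw [numCyclicSubgroups_zmod_prime_pow_prod_mul_totient hp, min_eq_right hk,
    min_eq_right (Nat.le_of_succ_le hk), Nat.totient_prime_pow_succ hp,
    Nat.mul_sub_one, Nat.mul_sub, ← mul_assoc]
  omega

theorem numCyclicSubgroups_zmod_prod_eq {p : ℕ} (hp : p.Prime) (a : ℕ) {n d : ℕ} [NeZero n]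
    (hd : d ∣ n) :
    numCyclicSubgroups (ZMod (p ^ a) × ZMod n) d =
      numCyclicSubgroups (ZMod (p ^ a) × ZMod (ordProj[p] n)) (ordProj[p] d) := by
  have hn := NeZero.ne n
  have hd₀ : d ≠ 0 := ne_zero_of_dvd_ne_zero hn hd
  have : NeZero (ordCompl[p] n) := ⟨(Nat.ordCompl_pos p hn).ne'⟩
  have : NeZero p := ⟨hp.ne_zero⟩
  have hcop := Nat.coprime_ordCompl hp hn
  let crt : ZMod n ≃+ ZMod (ordProj[p] n) × ZMod (ordCompl[p] n) :=
    ((ZMod.ringEquivCongr (Nat.ordProj_mul_ordCompl_eq_self n p).symm).trans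
      (ZMod.chineseRemainder (hcop.pow_left _))).toAddEquiv
  have hproj : ordProj[p] d ∣ Nat.card (ZMod (p ^ a) × ZMod (ordProj[p] n)) := by
    rw [Nat.card_prod, Nat.card_zmod, Nat.card_zmod]
    exact dvd_mul_of_dvd_right
      (pow_dvd_pow p ((Nat.factorization_le_iff_dvd hd₀ hn).2 hd p)) _
  have hcompl : ordCompl[p] d ∣ Nat.card (ZMod (ordCompl[p] n)) := by
    rw [Nat.card_zmod]
    exact Nat.ordCompl_dvd_ordCompl_of_dvd hd p
  rw [numCyclicSubgroups_congr
    (((AddEquiv.refl _).prodCongr crt).trans AddEquiv.prodAssoc.symm)]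
  conv_lhs => rw [← Nat.ordProj_mul_ordCompl_eq_self d p]
  rw [numCyclicSubgroups_prod_of_coprime (by
      simpa [Nat.card_prod] using (hcop.pow_left a).mul_left (hcop.pow_left _)) hproj hcompl,
    numCyclicSubgroups_of_isAddCyclic hcompl, mul_one]

/-- For a prime `p` with `p² ∣ n` and a divisor `d` of `n`, the number of cyclic
subgroups of `Z_{p²} × Z_n` of order `d` is `p²` if `p³ ∣ d`, `p² + p` if `p² ∣ d` and
`p³ ∤ d`, `p + 1` if `p ∣ d` and `p² ∤ d`, and `1` if `p ∤ d`. -/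
theorem num_cyclic_subgroups_Zp2_Zn (p n : ℕ) (hp : p.Prime) [NeZero n]
    (hpn : p ^ 2 ∣ n) (d : ℕ) (hd : d ∣ n) :
    (p ^ 3 ∣ d → numCyclicSubgroups (ZMod (p ^ 2) × ZMod n) d = p ^ 2) ∧
    (p ^ 2 ∣ d → ¬ p ^ 3 ∣ d → numCyclicSubgroups (ZMod (p ^ 2) × ZMod n) d = p ^ 2 + p) ∧
    (p ∣ d → ¬ p ^ 2 ∣ d → numCyclicSubgroups (ZMod (p ^ 2) × ZMod n) d = p + 1) ∧
    (¬ p ∣ d → numCyclicSubgroups (ZMod (p ^ 2) × ZMod n) d = 1) := by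
  have hn := NeZero.ne n
  have hd₀ : d ≠ 0 := ne_zero_of_dvd_ne_zero hn hd
  have hv : 2 ≤ n.factorization p := (hp.pow_dvd_iff_le_factorization hn).1 hpn
  have hk : d.factorization p ≤ n.factorization p :=
    (Nat.factorization_le_iff_dvd hd₀ hn).2 hd p
  have hdvd (i : ℕ) : p ^ i ∣ d ↔ i ≤ d.factorization p := hp.pow_dvd_iff_le_factorization hd₀
  have hdvd_one : p ∣ d ↔ 1 ≤ d.factorization p := by simpa using hdvd 1
  rw [hdvd_one, hdvd 2, hdvd 3, numCyclicSubgroups_zmod_prod_eq hp 2 hd]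
  generalize d.factorization p = k at *
  refine ⟨fun h3 => ?_, fun h2 h3 => ?_, fun h1 h2 => ?_, fun h1 => ?_⟩
  · obtain ⟨j, rfl⟩ : ∃ j, k = j + 3 := ⟨k - 3, by omega⟩
    refine numCyclicSubgroups_zmod_prime_pow_prod_eq hp (k := j + 2) hk ?_
    rw [min_eq_left (by omega), min_eq_left (by omega)]
    ring
  · obtain rfl : k = 2 := by omega
    exact numCyclicSubgroups_zmod_prime_pow_prod_eq hp (k := 1) hk (by norm_num; ring)
  · obtain rfl : k = 1 := by omega
    exact numCyclicSubgroups_zmod_prime_pow_prod_eq hp (k := 0) hk (by norm_num; ring)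
  · obtain rfl : k = 0 := by omega
    have : NeZero p := ⟨hp.ne_zero⟩
    rw [pow_zero, numCyclicSubgroups_one]
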